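/- Let p be an odd prime and G a finite group such that every cyclic-by-p subgroup of G is cyclic or dihedral of order 2·p^a. Suppose the Sylow p-subgroup P satisfies N_G(P) ≠ C_G(P), and let τ ∈ N_G(P) ∖ C_G(P). Then for every nontrivial subgroup Q ≤ P: C_G(Q) = C_G(P) is abelian, every element of the coset τ·C_G(Q) is an involution inverting C_G(Q), and N_G(Q) = N_G(P). -/

import Mathlib

/-- A finite group `H` is cyclic-by-`p` if it has a normal Sylow `p`-subgroup
(i.e. a normal `p`-subgroup of index prime to `p`) with cyclic quotient
(of order prime to `p`). -/
def IsCyclicByP (p : ℕ) (H : Type*) [Group H] : Prop :=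
  ∃ P : Subgroup H, P.Normal ∧ IsPGroup p P ∧ P.index.Coprime p ∧
    ∃ g : H, ∀ h : H, ∃ n : ℤ, g ^ n * h⁻¹ ∈ P

/-!
If a `p`-subgroup `R` is normalized but not centralized by a `p'`-element `u`, then `R ⊔ ⟨u⟩` is
cyclic-by-`p` and not abelian, hence dihedral of order `2 p ^ n`; so `u` is a reflection: an
involution inverting `R`. Splitting an element `σ` into commuting `p`- and `p'`-parts `a` and `b`,
the same conclusion holds for `σ` as soon as `a` centralizes `R`: then `b` inverts `R ⊔ ⟨a⟩`, and
`a`, being both inverted by and commuting with `b`, is trivial.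

The Sylow subgroup `P` is cyclic (as a `p`-group it is cyclic-by-`p`, and `p` is odd). The above
applies to every `σ ∈ N(P) ∖ C(P)`, whose `p`-part lies in `P`, and to every `τ * c` with
`c ∈ C(Q)`, which inverts a nontrivial `q ∈ Q`; there the `p`-part has odd order, so it
is a power of `(τ * c) ^ 2`, which centralizes `q`. Hence `τ` inverts `C(Q)`, which is therefore
abelian and, containing `P`, equals `C(P)`. Finally `N(P) ≤ N(Q)` because elements of `N(P)`
centralize or invert `P`, and `N(Q) ≤ N(P)` because `N(Q)` conjugates `P` into
`C(Q) = C(P) ≤ N(P)`, and a `p`-subgroup normalizing `P` lies in `P`.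
-/

open Subgroup

section

variable {G : Type*} [Group G] {p : ℕ}

theorem IsPGroup.isCyclicByP {H : Type*} [Group H] (hH : IsPGroup p H) : IsCyclicByP p H :=
  ⟨⊤, inferInstance, hH.of_equiv topEquiv.symm, by simp, 1, fun _ => ⟨0, by simp⟩⟩

theorem isCyclicByP_sup_zpowers {R : Subgroup G} (hR : IsPGroup p R) {u : G}
    (hu : u ∈ normalizer (R : Set G)) (hcop : (orderOf u).Coprime p) :
    IsCyclicByP p ↥(R ⊔ zpowers u) := by
  set H := R ⊔ zpowers u
  have hHR : H ≤ normalizer (R : Set G) := sup_le le_normalizer (zpowers_le.mpr hu)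
  have hmem : ∀ h : H, ∃ r ∈ R, ∃ n : ℤ, r * u ^ n = h := by
    intro h
    have := h.2
    rw [← SetLike.mem_coe, coe_mul_of_right_le_normalizer_left R _ (zpowers_le.mpr hu)] at this
    obtain ⟨r, hr, _, ⟨n, rfl⟩, hrn⟩ := this
    exact ⟨r, hr, n, hrn⟩
  let R' := R.subgroupOf H
  have : R'.Normal := normal_subgroupOf_of_le_normalizer hHR
  let uH : H := ⟨u, mem_sup_right (mem_zpowers u)⟩
  have hgen : ∀ h : H, ∃ n : ℤ, uH ^ n * h⁻¹ ∈ R' := by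
    intro h
    obtain ⟨r, hr, n, hrn⟩ := hmem h
    refine ⟨n, ?_⟩
    rw [mem_subgroupOf]
    simpa [uH, ← hrn] using inv_mem hr
  have hcyc : ∀ y : H ⧸ R', y ∈ zpowers (uH : H ⧸ R') := by
    rintro ⟨h⟩
    obtain ⟨n, hn⟩ := hgen h
    refine ⟨n, ?_⟩
    have := (QuotientGroup.eq_one_iff _).mpr hn
    rw [QuotientGroup.mk_mul, QuotientGroup.mk_inv, mul_inv_eq_one, QuotientGroup.mk_zpow] at this
    exact this
  refine ⟨R', ‹_›, hR.of_equiv (subgroupOfEquivOfLe le_sup_left).symm, ?_, uH, hgen⟩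
  rw [index_eq_card, ← orderOf_eq_card_of_forall_mem_zpowers hcyc]
  exact hcop.coprime_dvd_left
    ((orderOf_map_dvd (QuotientGroup.mk' R') uH).trans (orderOf_mk u _).dvd)

def CyclicByPSubgroupsCyclicOrDihedral (p : ℕ) (G : Type*) [Group G] : Prop :=
  ∀ H : Subgroup G, IsCyclicByP p H →
    IsCyclic H ∨ ∃ n : ℕ, Nonempty (H ≃* DihedralGroup (p ^ n))

theorem odd_orderOf_of_isPGroup [Fact p.Prime] (hp : Odd p) {R : Subgroup G}
    (hR : IsPGroup p R) {x : G} (hx : x ∈ R) : Odd (orderOf x) := by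
  obtain ⟨k, hk⟩ := IsPGroup.iff_orderOf.mp hR ⟨x, hx⟩
  exact orderOf_mk x hx ▸ hk ▸ hp.pow

theorem eq_one_of_inv_eq_of_odd_orderOf {a : G} (ha : Odd (orderOf a)) (h : a⁻¹ = a) : a = 1 := by
  have h2 : orderOf a ∣ 2 := orderOf_dvd_of_pow_eq_one (by rw [sq, mul_eq_one_iff_eq_inv, h])
  rcases (Nat.dvd_prime Nat.prime_two).mp h2 with h1 | h2
  · exact orderOf_eq_one_iff.mp h1
  · exact absurd (h2 ▸ ha) (by decide)

theorem mem_zpowers_sq_of_odd_orderOf {g a : G} (ha : a ∈ zpowers g) (hodd : Odd (orderOf a)) :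
    a ∈ zpowers (g ^ 2) := by
  obtain ⟨m, hm⟩ := exists_pow_eq_self_of_coprime (Nat.coprime_two_left.mpr hodd)
  obtain ⟨z, rfl⟩ := ha
  rw [← hm]
  refine pow_mem (mem_zpowers_iff.mpr ⟨z, ?_⟩) m
  simp only [← zpow_natCast, ← zpow_mul, mul_comm]

theorem exists_coprime_mul_isPGroup_eq [Finite G] [hp : Fact p.Prime] (g : G) :
    ∃ a ∈ zpowers g, ∃ b ∈ zpowers g,
      b * a = g ∧ IsPGroup p (zpowers a) ∧ (orderOf b).Coprime p := by
  set n := orderOf g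
  set k := n.factorization p
  set m := n / p ^ k
  have hn : p ^ k * m = n := Nat.ordProj_mul_ordCompl_eq_self n p
  have hm : p.Coprime m := Nat.coprime_ordCompl hp.out (orderOf_pos g).ne'
  obtain ⟨A, B, hAB⟩ := Nat.isCoprime_iff_coprime.mpr (hm.pow_left k)
  have hg : ∀ z : ℤ, g ^ (z * n) = 1 := fun z => by
    rw [zpow_mul', zpow_natCast, pow_orderOf_eq_one, one_zpow]
  refine ⟨g ^ (B * m), zpow_mem_zpowers _ _, g ^ (A * (p ^ k : ℕ)), zpow_mem_zpowers _ _,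
    ?_, ?_, ?_⟩
  · rw [← zpow_add, hAB, zpow_one]
  · refine IsPGroup.of_card_dvd_pow (n := k) ?_
    rw [Nat.card_zpowers]
    apply orderOf_dvd_of_pow_eq_one
    rw [← zpow_natCast, ← zpow_mul, mul_assoc, ← Nat.cast_mul, mul_comm m, hn]
    exact hg B
  · refine hm.symm.coprime_dvd_left (orderOf_dvd_of_pow_eq_one ?_)
    rw [← zpow_natCast, ← zpow_mul, mul_assoc, ← Nat.cast_mul, hn]
    exact hg A

theorem IsPGroup.isCyclic_of_cyclicByPSubgroupsCyclicOrDihedral [Fact p.Prime] (hp : Odd p)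
    (hG : CyclicByPSubgroupsCyclicOrDihedral p G) {R : Subgroup G} (hR : IsPGroup p R) :
    IsCyclic R := by
  refine (hG R hR.isCyclicByP).resolve_right ?_
  rintro ⟨n, ⟨e⟩⟩
  have h2 := odd_orderOf_of_isPGroup hp hR (e.symm (DihedralGroup.sr 0)).2
  rw [orderOf_coe, MulEquiv.orderOf_eq, DihedralGroup.orderOf_sr] at h2
  exact absurd h2 (by decide)

theorem DihedralGroup.sq_eq_one_and_conj_eq_inv_of_not_commute {n : ℕ} {u x₀ : DihedralGroup n}
    (hx₀ : Odd (orderOf x₀)) (hux₀ : ¬Commute u x₀) :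
    u ^ 2 = 1 ∧ ∀ x : DihedralGroup n, Odd (orderOf x) → u * x * u⁻¹ = x⁻¹ := by
  have rotation : ∀ x : DihedralGroup n, Odd (orderOf x) → ∃ i, x = r i := by
    rintro (i | i) hx
    · exact ⟨i, rfl⟩
    · exact absurd hx (by rw [orderOf_sr]; decide)
  obtain ⟨j, rfl⟩ := rotation x₀ hx₀
  rcases u with i | i
  · exact absurd (by simp [Commute, SemiconjBy, r_mul_r, add_comm]) hux₀
  refine ⟨by rw [sq, sr_mul_self], fun x hx => ?_⟩
  obtain ⟨k, rfl⟩ := rotation x hx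
  simp only [sr_mul_r, inv_sr, sr_mul_sr, inv_r]
  ring_nf

theorem sq_eq_one_and_conj_eq_inv_of_mulEquiv_dihedralGroup {D : Type*} [Group D] {n : ℕ}
    (e : D ≃* DihedralGroup n) {u x₀ : D} (hx₀ : Odd (orderOf x₀)) (hux₀ : ¬Commute u x₀) :
    u ^ 2 = 1 ∧ ∀ x : D, Odd (orderOf x) → u * x * u⁻¹ = x⁻¹ := by
  rw [← e.orderOf_eq] at hx₀
  have hcomm : ¬Commute (e u) (e x₀) := fun h => hux₀ (by simpa using h.map e.symm)
  obtain ⟨hu2, hconj⟩ := DihedralGroup.sq_eq_one_and_conj_eq_inv_of_not_commute hx₀ hcomm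
  refine ⟨e.injective (by simpa using hu2), fun x hx => e.injective ?_⟩
  simpa using hconj (e x) (by rwa [e.orderOf_eq])

theorem sq_eq_one_and_conj_eq_inv_of_coprime [Finite G] [Fact p.Prime] (hp : Odd p)
    (hG : CyclicByPSubgroupsCyclicOrDihedral p G) {R : Subgroup G} (hR : IsPGroup p R) {u : G}
    (hu : u ∈ normalizer (R : Set G)) (hcop : (orderOf u).Coprime p)
    (hnc : u ∉ centralizer (R : Set G)) :
    u ^ 2 = 1 ∧ ∀ x ∈ R, u * x * u⁻¹ = x⁻¹ := by
  set H := R ⊔ zpowers u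
  have hRH : R ≤ H := le_sup_left
  let uH : H := ⟨u, mem_sup_right (mem_zpowers u)⟩
  have hodd : ∀ x (hx : x ∈ R), Odd (orderOf (⟨x, hRH hx⟩ : H)) := fun x hx => by
    simpa using odd_orderOf_of_isPGroup hp hR hx
  obtain ⟨x₀, hx₀, hux₀⟩ : ∃ x₀, ∃ hx₀ : x₀ ∈ R, ¬Commute uH ⟨x₀, hRH hx₀⟩ := by
    simp only [mem_centralizer_iff, SetLike.mem_coe, not_forall] at hnc
    obtain ⟨x₀, hx₀, hne⟩ := hnc
    exact ⟨x₀, hx₀, fun h => hne (congrArg Subtype.val h.eq).symm⟩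
  rcases hG H (isCyclicByP_sup_zpowers hR hu hcop) with hcyc | ⟨n, ⟨e⟩⟩
  · exact absurd (mul_comm' _ _) hux₀
  obtain ⟨hu2, hconj⟩ := sq_eq_one_and_conj_eq_inv_of_mulEquiv_dihedralGroup e (hodd x₀ hx₀) hux₀
  exact ⟨congrArg Subtype.val hu2, fun x hx => congrArg Subtype.val (hconj _ (hodd x hx))⟩

theorem sq_eq_one_and_conj_eq_inv_of_pPart_mem_centralizer [Finite G] [Fact p.Prime] (hp : Odd p)
    (hG : CyclicByPSubgroupsCyclicOrDihedral p G) {R : Subgroup G} (hR : IsPGroup p R) {σ : G}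
    (hσ : σ ∈ normalizer (R : Set G)) (hσc : σ ∉ centralizer (R : Set G))
    (hpart : ∀ a ∈ zpowers σ, IsPGroup p (zpowers a) → a ∈ centralizer (R : Set G)) :
    σ ^ 2 = 1 ∧ ∀ x ∈ R, σ * x * σ⁻¹ = x⁻¹ := by
  obtain ⟨a, haσ, b, hbσ, rfl, ha, hb⟩ := exists_coprime_mul_isPGroup_eq (p := p) σ
  have haC := hpart a haσ ha
  have hba : b ∈ centralizer (zpowers a : Set G) :=
    centralizer_le (zpowers_le.mpr haσ) (le_centralizer (H := zpowers (b * a)) hbσ)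
  have hR' : IsPGroup p ↥(R ⊔ zpowers a) :=
    hR.to_sup_of_normal_left' ha (zpowers_le.mpr (centralizer_le_normalizer _ haC))
  have hbN : b ∈ normalizer ((R ⊔ zpowers a : Subgroup G) : Set G) :=
    normalizer_inf_normalizer_le_normalizer_sup R (zpowers a)
      ⟨zpowers_le.mpr hσ hbσ, centralizer_le_normalizer _ hba⟩
  have hbC : b ∉ centralizer ((R ⊔ zpowers a : Subgroup G) : Set G) := fun h =>
    hσc (mul_mem (centralizer_le (SetLike.coe_subset_coe.mpr le_sup_left) h) haC)
  obtain ⟨hb2, hbinv⟩ := sq_eq_one_and_conj_eq_inv_of_coprime hp hG hR' hbN hb hbC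
  have ha1 : a = 1 := by
    refine eq_one_of_inv_eq_of_odd_orderOf (odd_orderOf_of_isPGroup hp ha (mem_zpowers a)) ?_
    rw [← hbinv a (mem_sup_right (mem_zpowers a))]
    exact (show Commute a b from mem_centralizer_iff.mp hba a (mem_zpowers a)).symm.mul_inv_cancel
  subst ha1
  simpa using ⟨hb2, fun x hx => hbinv x (mem_sup_left hx)⟩

theorem IsPGroup.le_of_le_normalizer_sylow {K : Subgroup G} (hK : IsPGroup p K)
    (P : Sylow p G) (h : K ≤ normalizer ((P : Subgroup G) : Set G)) : K ≤ P :=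
  inf_eq_left.mp ((inf_eq_left.mpr h).symm.trans (hK.inf_normalizer_sylow P)).symm

theorem Sylow.sq_eq_one_and_conj_eq_inv [Finite G] [Fact p.Prime] (hp : Odd p)
    (hG : CyclicByPSubgroupsCyclicOrDihedral p G) (P : Sylow p G) {σ : G}
    (hσ : σ ∈ normalizer ((P : Subgroup G) : Set G))
    (hσc : σ ∉ centralizer ((P : Subgroup G) : Set G)) :
    σ ^ 2 = 1 ∧ ∀ x ∈ P, σ * x * σ⁻¹ = x⁻¹ := by
  have : IsCyclic P := P.isPGroup'.isCyclic_of_cyclicByPSubgroupsCyclicOrDihedral hp hG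
  refine sq_eq_one_and_conj_eq_inv_of_pPart_mem_centralizer hp hG P.isPGroup' hσ hσc fun a haσ ha =>
    le_centralizer (H := (P : Subgroup G)) ?_
  have haN : zpowers a ≤ normalizer ((P : Subgroup G) : Set G) :=
    zpowers_le.mpr (zpowers_le.mpr hσ haσ)
  exact ha.le_of_le_normalizer_sylow P haN (mem_zpowers a)

theorem sq_eq_one_of_conj_eq_inv [Finite G] [Fact p.Prime] (hp : Odd p)
    (hG : CyclicByPSubgroupsCyclicOrDihedral p G) {q s : G} (hq : IsPGroup p (zpowers q))
    (hq1 : q ≠ 1) (hs : s * q * s⁻¹ = q⁻¹) : s ^ 2 = 1 := by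
  have hodd : Odd (orderOf q) := odd_orderOf_of_isPGroup hp hq (mem_zpowers q)
  have hsN : s ∈ normalizer (zpowers q : Set G) := by
    rw [mem_normalizer_iff_map_conj_eq, MonoidHom.map_zpowers]
    simp [hs]
  have hsC : s ∉ centralizer (zpowers q : Set G) := by
    rw [zpowers_eq_closure, centralizer_closure, mem_centralizer_singleton_iff]
    intro h
    apply hq1 (eq_one_of_inv_eq_of_odd_orderOf hodd _)
    rw [← hs, h, mul_inv_cancel_right]
  have hs2 : s ^ 2 ∈ centralizer (zpowers q : Set G) := by
    rw [zpowers_eq_closure, centralizer_closure, mem_centralizer_singleton_iff,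
      ← mul_inv_eq_iff_eq_mul]
    calc s ^ 2 * q * (s ^ 2)⁻¹ = (s * (s * q * s⁻¹)⁻¹ * s⁻¹)⁻¹ := by group
      _ = q := by rw [hs, inv_inv, hs, inv_inv]
  refine (sq_eq_one_and_conj_eq_inv_of_pPart_mem_centralizer hp hG hq hsN hsC fun a ha hpa => ?_).1
  exact zpowers_le.mpr hs2
    (mem_zpowers_sq_of_odd_orderOf ha (odd_orderOf_of_isPGroup hp hpa (mem_zpowers a)))

theorem Sylow.sq_mul_eq_one_of_commute [Finite G] [Fact p.Prime] (hp : Odd p)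
    (hG : CyclicByPSubgroupsCyclicOrDihedral p G) (P : Sylow p G) {τ q c : G}
    (hτ : τ ∈ normalizer ((P : Subgroup G) : Set G))
    (hτc : τ ∉ centralizer ((P : Subgroup G) : Set G)) (hqP : q ∈ P) (hq1 : q ≠ 1)
    (hqc : Commute q c) : (τ * c) ^ 2 = 1 := by
  obtain ⟨-, hτP⟩ := P.sq_eq_one_and_conj_eq_inv hp hG hτ hτc
  refine sq_eq_one_of_conj_eq_inv hp hG (P.isPGroup'.to_le (zpowers_le.mpr hqP)) hq1 ?_
  rw [show τ * c * q * (τ * c)⁻¹ = τ * (c * q * c⁻¹) * τ⁻¹ by group, hqc.symm.mul_inv_cancel,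
    hτP q hqP]

theorem Sylow.normalizer_le_normalizer_of_le [Finite G] [Fact p.Prime] (hp : Odd p)
    (hG : CyclicByPSubgroupsCyclicOrDihedral p G) (P : Sylow p G) {Q : Subgroup G}
    (hQP : Q ≤ P) : normalizer ((P : Subgroup G) : Set G) ≤ normalizer (Q : Set G) := fun g hg =>
  mem_normalizer_fintype fun x hx => by
    by_cases hgc : g ∈ centralizer ((P : Subgroup G) : Set G)
    · rwa [(show Commute x g from mem_centralizer_iff.mp hgc x (hQP hx)).symm.mul_inv_cancel]
    · rw [(P.sq_eq_one_and_conj_eq_inv hp hG hg hgc).2 x (hQP hx)]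
      exact inv_mem hx

theorem Sylow.normalizer_le_normalizer_of_centralizer_le [Finite G] [Fact p.Prime] (P : Sylow p G)
    {Q : Subgroup G} (hPQ : (P : Subgroup G) ≤ centralizer (Q : Set G))
    (hQP : centralizer (Q : Set G) ≤ normalizer ((P : Subgroup G) : Set G)) :
    normalizer (Q : Set G) ≤ normalizer ((P : Subgroup G) : Set G) := by
  intro g hg
  rw [mem_normalizer_iff_map_conj_eq] at hg ⊢
  have hle : (P : Subgroup G).map (MulAut.conj g) ≤ normalizer ((P : Subgroup G) : Set G) := calc
    _ ≤ (centralizer (Q : Set G)).map (MulAut.conj g) := map_mono hPQ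
    _ ≤ centralizer ((Q.map (MulAut.conj g) : Subgroup G) : Set G) :=
      map_centralizer_le_centralizer_image _ _
    _ = centralizer (Q : Set G) := by rw [hg]
    _ ≤ _ := hQP
  exact eq_of_le_of_card_ge ((P.isPGroup'.map _).le_of_le_normalizer_sylow P hle)
    (card_map_of_injective (MulAut.conj g).injective).ge

theorem mul_comm_of_conj_eq_inv {K : Subgroup G} {τ : G} (h : ∀ c ∈ K, τ * c * τ⁻¹ = c⁻¹) :
    ∀ a ∈ K, ∀ b ∈ K, a * b = b * a := by
  intro a ha b hb
  have hab := h _ (mul_mem ha hb)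
  rw [show τ * (a * b) * τ⁻¹ = (τ * a * τ⁻¹) * (τ * b * τ⁻¹) by group, h a ha, h b hb,
    mul_inv_rev] at hab
  simpa using congrArg (·⁻¹) hab.symm

end

theorem stmt6_general {G : Type*} [Group G] [Finite G] (p : ℕ) [Fact p.Prime] (hp : Odd p)
    (hG : ∀ H : Subgroup G, IsCyclicByP p H →
      IsCyclic H ∨ ∃ n : ℕ, Nonempty (H ≃* DihedralGroup (p ^ n)))
    (P : Sylow p G)
    (τ : G) (hτ : τ ∈ Subgroup.normalizer ((P : Subgroup G) : Set G))
    (hτc : τ ∉ Subgroup.centralizer ((P : Subgroup G) : Set G))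
    (Q : Subgroup G) (hQ : Q ≠ ⊥) (hQP : Q ≤ P) :
    Subgroup.centralizer (Q : Set G) = Subgroup.centralizer ((P : Subgroup G) : Set G) ∧
    (∀ a ∈ Subgroup.centralizer (Q : Set G), ∀ b ∈ Subgroup.centralizer (Q : Set G),
      a * b = b * a) ∧
    (∀ c ∈ Subgroup.centralizer (Q : Set G), (τ * c) ^ 2 = 1 ∧ τ * c ≠ 1 ∧
      ∀ a ∈ Subgroup.centralizer (Q : Set G), (τ * c) * a * (τ * c)⁻¹ = a⁻¹) ∧
    Subgroup.normalizer (Q : Set G) = Subgroup.normalizer ((P : Subgroup G) : Set G) := by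
  have : IsCyclic P := P.isPGroup'.isCyclic_of_cyclicByPSubgroupsCyclicOrDihedral hp hG
  obtain ⟨hτ2, -⟩ := P.sq_eq_one_and_conj_eq_inv hp hG hτ hτc
  obtain ⟨⟨q, hqQ⟩, hq1⟩ := ne_bot_iff_exists_ne_one.mp hQ
  have hτc2 : ∀ c ∈ centralizer (Q : Set G), (τ * c) ^ 2 = 1 := fun c hc =>
    P.sq_mul_eq_one_of_commute hp hG hτ hτc (hQP hqQ) (by simpa using hq1)
      (mem_centralizer_iff.mp hc q hqQ)
  have hτC : ∀ c ∈ centralizer (Q : Set G), τ * c * τ⁻¹ = c⁻¹ := fun c hc => by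
    rw [inv_eq_of_mul_eq_one_right (by rw [← sq, hτ2])]
    exact eq_inv_of_mul_eq_one_left (by rw [← hτc2 c hc, sq]; group)
  have hab := mul_comm_of_conj_eq_inv hτC
  have hPQ : (P : Subgroup G) ≤ centralizer (Q : Set G) :=
    (le_centralizer _).trans (centralizer_le (SetLike.coe_subset_coe.mpr hQP))
  have hCQ : centralizer (Q : Set G) = centralizer ((P : Subgroup G) : Set G) :=
    le_antisymm (fun c hc => mem_centralizer_iff.mpr fun x hx => hab x (hPQ hx) c hc)
      (centralizer_le (SetLike.coe_subset_coe.mpr hQP))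
  refine ⟨hCQ, hab, fun c hc => ⟨hτc2 c hc, fun h => hτc ?_, fun a ha => ?_⟩,
    le_antisymm (P.normalizer_le_normalizer_of_centralizer_le hPQ
      (hCQ ▸ centralizer_le_normalizer _)) (P.normalizer_le_normalizer_of_le hp hG hQP)⟩
  · exact eq_inv_of_mul_eq_one_left h ▸ hCQ ▸ inv_mem hc
  · rw [show τ * c * a * (τ * c)⁻¹ = τ * (c * a * c⁻¹) * τ⁻¹ by group,
      (show Commute c a from hab c hc a ha).mul_inv_cancel, hτC a ha]

theorem stmt6 {G : Type*} [Group G] [Finite G] (p : ℕ) [Fact p.Prime] (hp : Odd p)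
    (hG : ∀ H : Subgroup G, IsCyclicByP p H →
      IsCyclic H ∨ ∃ n : ℕ, Nonempty (H ≃* DihedralGroup (p ^ n)))
    (P : Sylow p G)
    (hne : Subgroup.normalizer ((P : Subgroup G) : Set G) ≠ Subgroup.centralizer ((P : Subgroup G) : Set G))
    (τ : G) (hτ : τ ∈ Subgroup.normalizer ((P : Subgroup G) : Set G))
    (hτc : τ ∉ Subgroup.centralizer ((P : Subgroup G) : Set G))
    (Q : Subgroup G) (hQ : Q ≠ ⊥) (hQP : Q ≤ P) :
    Subgroup.centralizer (Q : Set G) = Subgroup.centralizer ((P : Subgroup G) : Set G) ∧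
    (∀ a ∈ Subgroup.centralizer (Q : Set G), ∀ b ∈ Subgroup.centralizer (Q : Set G),
      a * b = b * a) ∧
    (∀ c ∈ Subgroup.centralizer (Q : Set G), (τ * c) ^ 2 = 1 ∧ τ * c ≠ 1 ∧
      ∀ a ∈ Subgroup.centralizer (Q : Set G), (τ * c) * a * (τ * c)⁻¹ = a⁻¹) ∧
    Subgroup.normalizer (Q : Set G) = Subgroup.normalizer ((P : Subgroup G) : Set G) :=
  stmt6_general p hp hG P τ hτ hτc Q hQ hQP
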